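/- (Lower bound / sharpness) Let n ≥ 2, m ≥ 1, 0 ≤ α < 1, and let f_1 = ⋯ = f_m = χ_{B^n} be the characteristic function of the unit ball of ℝ^n. Then there exist constants C = C(m,n,α) > 0 and R > 0 such that for all x ∈ ℝ^n with |x| ≥ R, S^m_α(f_1,...,f_m)(x) ≥ C |x|^{−(mn−α)}. Consequently S^m_α(χ_{B^n},...,χ_{B^n}) ∉ L^p(ℝ^n) whenever p ≤ n/(mn−α). -/

import Mathlib

open MeasureTheory
open scoped ENNReal NNReal

/-- The `i`-th block in `ℝ^n` of a point of `ℝ^{mn} = (ℝ^n)^m`. -/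
def block {n m : ℕ} (y : EuclideanSpace ℝ (Fin m × Fin n)) (i : Fin m) :
    EuclideanSpace ℝ (Fin n) := WithLp.toLp 2 (fun j => y (i, j))

/-- Total surface measure of the unit sphere in `ℝ^d`: `ω_{d-1} = 2π^{d/2}/Γ(d/2)`. -/
noncomputable def omegaConst (d : ℕ) : ℝ :=
  2 * Real.pi ^ ((d : ℝ) / 2) / Real.Gamma ((d : ℝ) / 2)

/-- The Beta function `B(a,b) = Γ(a)Γ(b)/Γ(a+b)`. -/
noncomputable def betaG (a b : ℝ) : ℝ :=
  Real.Gamma a * Real.Gamma b / Real.Gamma (a + b)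

/-- `S^m_α(f₁,...,f_m)(x) = (2/(ω_{mn-1}B(mn/2,1-α))) sup_{t>0}
∫_{B^{mn}} ∏ᵢ |fᵢ(x-tyᵢ)| (1-|y|²)^{-α} dy`. -/
noncomputable def fracSphMaxSup {n m : ℕ} (α : ℝ)
    (f : Fin m → EuclideanSpace ℝ (Fin n) → ℝ) (x : EuclideanSpace ℝ (Fin n)) : ℝ≥0∞ :=
  ENNReal.ofReal (2 / (omegaConst (m * n) * betaG ((m * n : ℕ) / 2 : ℝ) (1 - α))) *
    ⨆ t > (0 : ℝ),
      ∫⁻ y in Metric.ball (0 : EuclideanSpace ℝ (Fin m × Fin n)) 1,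
        (∏ i, (‖f i (x - t • block y i)‖₊ : ℝ≥0∞)) *
          ENNReal.ofReal ((1 - ‖y‖ ^ 2) ^ (-α))

/-- The characteristic function of the unit ball of `ℝ^n`. -/
noncomputable def chiBall (n : ℕ) : EuclideanSpace ℝ (Fin n) → ℝ :=
  Set.indicator (Metric.ball (0 : EuclideanSpace ℝ (Fin n)) 1) fun _ => (1 : ℝ)

/-!
For `|x| ≥ 1` take `t = √m |x|` and the point `z = (1 - 1/(2|x|)) (x, …, x) / t` of `B^{mn}`.
On the ball of radius `1/(8t)` around `z` every `x - t yᵢ` lies in the unit ball, while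
`1 - |y|² ≤ 2/|x|`, so the integrand is at least `(2/|x|)^{-α}` there. This ball has volume
`≍ |x|^{-mn}`, which gives the lower bound `≳ |x|^{α - mn}`. A function bounded below by
`|x|^{-s}` near infinity with `s ≤ n` has infinite integral over `ℝⁿ` (integrate in polar
coordinates), and `S^p ≳ |x|^{-(mn - α)p}` with `(mn - α)p ≤ n`.
-/

open Set Module

section PowerDecay

variable {E : Type*} [NormedAddCommGroup E] [NormedSpace ℝ E] [FiniteDimensional ℝ E]
  [MeasurableSpace E] [BorelSpace E] [Nontrivial E] (μ : Measure E) [μ.IsAddHaarMeasure]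

theorem not_integrableOn_norm_rpow_neg {R s : ℝ} (hR : 0 < R) (hs : s ≤ finrank ℝ E) :
    ¬ IntegrableOn (fun x : E ↦ ‖x‖ ^ (-s)) {x | R ≤ ‖x‖} μ := by
  intro h
  rw [← integrable_indicator_iff (measurableSet_le measurable_const measurable_norm)] at h
  have hrad : Integrable (fun x : E ↦ (Ici R).indicator (fun y ↦ y ^ (-s)) ‖x‖) μ := by
    refine h.congr (.of_forall fun x ↦ ?_)
    by_cases hx : R ≤ ‖x‖ <;> simp [hx]
  rw [integrable_fun_norm_addHaar] at hrad
  have hpow : IntegrableOn (fun y : ℝ ↦ y ^ (((finrank ℝ E - 1 : ℕ) : ℝ) - s)) (Ioi R) := by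
    refine (hrad.mono_set (Ioi_subset_Ioi hR.le)).congr_fun (fun y (hy : R < y) ↦ ?_)
      measurableSet_Ioi
    have hy0 : 0 < y := hR.trans hy
    dsimp only
    rw [indicator_of_mem (mem_Ici.2 hy.le), smul_eq_mul, ← Real.rpow_natCast,
      ← Real.rpow_add hy0, sub_eq_add_neg]
  have hdim : 1 ≤ finrank ℝ E := finrank_pos
  rw [integrableOn_Ioi_rpow_iff hR, Nat.cast_sub hdim] at hpow
  push_cast at hpow
  linarith

theorem setLIntegral_norm_rpow_neg_eq_top {R s : ℝ} (hR : 0 < R) (hs : s ≤ finrank ℝ E) :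
    ∫⁻ x in {x | R ≤ ‖x‖}, ENNReal.ofReal (‖x‖ ^ (-s)) ∂μ = ⊤ := by
  by_contra h
  refine not_integrableOn_norm_rpow_neg μ hR hs
    ⟨(measurable_norm.pow_const _).aestronglyMeasurable, ?_⟩
  rw [HasFiniteIntegral, lt_top_iff_ne_top]
  simpa only [Real.enorm_eq_ofReal (Real.rpow_nonneg (norm_nonneg _) _)] using h

theorem lintegral_eq_top_of_ofReal_mul_norm_rpow_neg_le {F : E → ℝ≥0∞} {C R s : ℝ}
    (hC : 0 < C) (hR : 0 < R) (hs : s ≤ finrank ℝ E)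
    (hF : ∀ x, R ≤ ‖x‖ → ENNReal.ofReal (C * ‖x‖ ^ (-s)) ≤ F x) :
    ∫⁻ x, F x ∂μ = ⊤ := by
  have hS : MeasurableSet {x : E | R ≤ ‖x‖} := measurableSet_le measurable_const measurable_norm
  refine top_le_iff.1 ?_
  calc ⊤ = ENNReal.ofReal C * ∫⁻ x in {x | R ≤ ‖x‖}, ENNReal.ofReal (‖x‖ ^ (-s)) ∂μ := by
        rw [setLIntegral_norm_rpow_neg_eq_top μ hR hs, ENNReal.mul_top (by positivity)]
    _ = ∫⁻ x in {x | R ≤ ‖x‖}, ENNReal.ofReal (C * ‖x‖ ^ (-s)) ∂μ := by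
        rw [← lintegral_const_mul' _ _ ENNReal.ofReal_ne_top]
        simp_rw [ENNReal.ofReal_mul hC.le]
    _ ≤ ∫⁻ x in {x | R ≤ ‖x‖}, F x ∂μ := setLIntegral_mono' hS hF
    _ ≤ ∫⁻ x, F x ∂μ := setLIntegral_le_lintegral _ _

end PowerDecay

section Blocks

variable {n m : ℕ}

def stack (m : ℕ) (u : EuclideanSpace ℝ (Fin n)) : EuclideanSpace ℝ (Fin m × Fin n) :=
  WithLp.toLp 2 fun p ↦ u p.2

@[simp]
theorem block_stack (u : EuclideanSpace ℝ (Fin n)) (i : Fin m) : block (stack m u) i = u := rfl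

@[simp]
theorem block_sub (y z : EuclideanSpace ℝ (Fin m × Fin n)) (i : Fin m) :
    block (y - z) i = block y i - block z i := rfl

@[simp]
theorem block_smul (c : ℝ) (y : EuclideanSpace ℝ (Fin m × Fin n)) (i : Fin m) :
    block (c • y) i = c • block y i := rfl

theorem norm_block_le (y : EuclideanSpace ℝ (Fin m × Fin n)) (i : Fin m) : ‖block y i‖ ≤ ‖y‖ := by
  rw [EuclideanSpace.norm_eq, EuclideanSpace.norm_eq, Fintype.sum_prod_type]
  exact Real.sqrt_le_sqrt <| Finset.single_le_sum (f := fun a ↦ ∑ j, ‖y (a, j)‖ ^ 2)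
    (fun a _ ↦ by positivity) (Finset.mem_univ i)

theorem norm_stack (u : EuclideanSpace ℝ (Fin n)) : ‖stack m u‖ = √m * ‖u‖ := by
  rw [EuclideanSpace.norm_eq, EuclideanSpace.norm_eq, Fintype.sum_prod_type]
  simp only [stack, Finset.sum_const, Finset.card_univ, Fintype.card_fin, nsmul_eq_mul]
  rw [Real.sqrt_mul (Nat.cast_nonneg m)]

end Blocks

section PeakCenter

variable {n m : ℕ} {x : EuclideanSpace ℝ (Fin n)}

noncomputable def peakCenter (m : ℕ) (x : EuclideanSpace ℝ (Fin n)) :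
    EuclideanSpace ℝ (Fin m × Fin n) :=
  ((1 - (2 * ‖x‖)⁻¹) / (√m * ‖x‖)) • stack m x

theorem norm_peakCenter (hm : 1 ≤ m) (hx : 1 ≤ ‖x‖) :
    ‖peakCenter m x‖ = 1 - (2 * ‖x‖)⁻¹ := by
  have hsm : 0 < √(m : ℝ) := Real.sqrt_pos.2 (by exact_mod_cast hm)
  have hδ : (2 * ‖x‖)⁻¹ ≤ 1 := inv_le_one_of_one_le₀ (by linarith)
  rw [peakCenter, norm_smul, norm_stack,
    Real.norm_of_nonneg (div_nonneg (by linarith) (by positivity))]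
  field_simp

theorem norm_sub_smul_block_peakCenter (hm : 1 ≤ m) (hx : 1 ≤ ‖x‖) (i : Fin m) :
    ‖x - (√m * ‖x‖) • block (peakCenter m x) i‖ = 1 / 2 := by
  have hsm : 0 < √(m : ℝ) := Real.sqrt_pos.2 (by exact_mod_cast hm)
  have hx0 : 0 < ‖x‖ := one_pos.trans_le hx
  have hcoef : (√m * ‖x‖) * ((1 - (2 * ‖x‖)⁻¹) / (√m * ‖x‖)) = 1 - (2 * ‖x‖)⁻¹ := by
    field_simp
  have hsub : x - (√m * ‖x‖) • block (peakCenter m x) i = (2 * ‖x‖)⁻¹ • x := by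
    rw [peakCenter, block_smul, block_stack, smul_smul, hcoef, sub_smul, one_smul, sub_sub_cancel]
  rw [hsub, norm_smul, Real.norm_of_nonneg (by positivity)]
  field_simp

theorem sub_smul_block_mem_ball_of_mem_ball_peakCenter (hm : 1 ≤ m) (hx : 1 ≤ ‖x‖)
    {y : EuclideanSpace ℝ (Fin m × Fin n)}
    (hy : y ∈ Metric.ball (peakCenter m x) (8 * (√m * ‖x‖))⁻¹) (i : Fin m) :
    x - (√m * ‖x‖) • block y i ∈ Metric.ball 0 1 := by
  have ht : 0 < √(m : ℝ) * ‖x‖ :=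
    mul_pos (Real.sqrt_pos.2 (by exact_mod_cast hm)) (one_pos.trans_le hx)
  rw [Metric.mem_ball, dist_eq_norm, ← norm_neg, neg_sub] at hy
  have hsplit : x - (√m * ‖x‖) • block y i =
      (x - (√m * ‖x‖) • block (peakCenter m x) i) +
        (√m * ‖x‖) • block (peakCenter m x - y) i := by
    rw [block_sub, smul_sub]
    abel
  have hnear : (√m * ‖x‖) * ‖peakCenter m x - y‖ ≤ 1 / 8 := by
    calc (√m * ‖x‖) * ‖peakCenter m x - y‖ ≤ (√m * ‖x‖) * (8 * (√m * ‖x‖))⁻¹ := by gcongr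
      _ = 1 / 8 := by field_simp
  rw [mem_ball_zero_iff, hsplit]
  calc _ ≤ ‖x - (√m * ‖x‖) • block (peakCenter m x) i‖ +
          (√m * ‖x‖) * ‖block (peakCenter m x - y) i‖ :=
        (norm_add_le _ _).trans_eq (by rw [norm_smul, Real.norm_of_nonneg ht.le])
    _ ≤ 1 / 2 + 1 / 8 := by
        rw [norm_sub_smul_block_peakCenter hm hx]
        gcongr
        exact (mul_le_mul_of_nonneg_left (norm_block_le _ i) ht.le).trans hnear
    _ < 1 := by norm_num

theorem peakRadius_le_inv_two_mul (hm : 1 ≤ m) :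
    (8 * (√m * ‖x‖))⁻¹ ≤ (2 * ‖x‖)⁻¹ := by
  rcases (norm_nonneg x).eq_or_lt with hx | hx
  · simp [← hx]
  have hsm : 1 ≤ √(m : ℝ) := Real.one_le_sqrt.2 (by exact_mod_cast hm)
  gcongr
  · norm_num
  · exact le_mul_of_one_le_left hx.le hsm

theorem ball_peakCenter_subset (hm : 1 ≤ m) (hx : 1 ≤ ‖x‖) :
    Metric.ball (peakCenter m x) (8 * (√m * ‖x‖))⁻¹ ⊆ Metric.ball 0 1 := by
  refine Metric.ball_subset_ball' ?_
  rw [dist_zero_right, norm_peakCenter hm hx]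
  linarith [peakRadius_le_inv_two_mul (x := x) hm]

theorem one_sub_norm_sq_le_of_mem_ball_peakCenter (hm : 1 ≤ m) (hx : 1 ≤ ‖x‖)
    {y : EuclideanSpace ℝ (Fin m × Fin n)}
    (hy : y ∈ Metric.ball (peakCenter m x) (8 * (√m * ‖x‖))⁻¹) :
    1 - ‖y‖ ^ 2 ≤ 2 / ‖x‖ := by
  have hy1 : ‖y‖ < 1 := mem_ball_zero_iff.1 (ball_peakCenter_subset hm hx hy)
  have hclose : 1 - ‖y‖ ≤ 1 / ‖x‖ := by
    have := norm_sub_norm_le (peakCenter m x) y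
    rw [norm_peakCenter hm hx, ← dist_eq_norm, dist_comm] at this
    have h2 : (2 * ‖x‖)⁻¹ = 1 / ‖x‖ / 2 := by field_simp
    linarith [Metric.mem_ball.1 hy, peakRadius_le_inv_two_mul (x := x) hm]
  calc 1 - ‖y‖ ^ 2 = (1 - ‖y‖) * (1 + ‖y‖) := by ring
    _ ≤ 1 / ‖x‖ * 2 := by gcongr; linarith
    _ = 2 / ‖x‖ := by ring

end PeakCenter

theorem omegaConst_pos {d : ℕ} (hd : 0 < d) : 0 < omegaConst d := by
  unfold omegaConst
  have : (0 : ℝ) < d := by exact_mod_cast hd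
  exact div_pos (by positivity) (Real.Gamma_pos_of_pos (by positivity))

theorem betaG_pos {a b : ℝ} (ha : 0 < a) (hb : 0 < b) : 0 < betaG a b :=
  div_pos (mul_pos (Real.Gamma_pos_of_pos ha) (Real.Gamma_pos_of_pos hb))
    (Real.Gamma_pos_of_pos (add_pos ha hb))

theorem ofReal_mul_setLIntegral_le_fracSphMaxSup {n m : ℕ} (α : ℝ)
    (f : Fin m → EuclideanSpace ℝ (Fin n) → ℝ) (x : EuclideanSpace ℝ (Fin n)) {t : ℝ}
    (ht : 0 < t) :
    ENNReal.ofReal (2 / (omegaConst (m * n) * betaG ((m * n : ℕ) / 2 : ℝ) (1 - α))) *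
        ∫⁻ y in Metric.ball (0 : EuclideanSpace ℝ (Fin m × Fin n)) 1,
          (∏ i, (‖f i (x - t • block y i)‖₊ : ℝ≥0∞)) * ENNReal.ofReal ((1 - ‖y‖ ^ 2) ^ (-α)) ≤
      fracSphMaxSup α f x := by
  unfold fracSphMaxSup
  gcongr
  exact le_iSup₂_of_le (f := fun (s : ℝ) (_ : s > 0) ↦ ∫⁻ y in Metric.ball 0 1,
    (∏ i, (‖f i (x - s • block y i)‖₊ : ℝ≥0∞)) * ENNReal.ofReal ((1 - ‖y‖ ^ 2) ^ (-α))) t ht le_rfl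

theorem ofReal_mul_volume_le_setLIntegral_chiBall {n m : ℕ} {α : ℝ} (hm : 1 ≤ m) (hα : 0 ≤ α)
    {x : EuclideanSpace ℝ (Fin n)} (hx : 1 ≤ ‖x‖) :
    ENNReal.ofReal ((2 / ‖x‖) ^ (-α)) *
        volume (Metric.ball (peakCenter m x) (8 * (√m * ‖x‖))⁻¹) ≤
      ∫⁻ y in Metric.ball (0 : EuclideanSpace ℝ (Fin m × Fin n)) 1,
        (∏ i, (‖chiBall n (x - (√m * ‖x‖) • block y i)‖₊ : ℝ≥0∞)) *
          ENNReal.ofReal ((1 - ‖y‖ ^ 2) ^ (-α)) := by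
  rw [← setLIntegral_const]
  refine (setLIntegral_mono' Metric.isOpen_ball.measurableSet fun y hy ↦ ?_).trans
    (lintegral_mono_set (ball_peakCenter_subset hm hx))
  have hprod : ∏ i, (‖chiBall n (x - (√m * ‖x‖) • block y i)‖₊ : ℝ≥0∞) = 1 :=
    Finset.prod_eq_one fun i _ ↦ by
      simp [chiBall, sub_smul_block_mem_ball_of_mem_ball_peakCenter hm hx hy i]
  have hy1 : ‖y‖ < 1 := mem_ball_zero_iff.1 (ball_peakCenter_subset hm hx hy)
  have hpos : 0 < 1 - ‖y‖ ^ 2 := by nlinarith [norm_nonneg y]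
  rw [hprod, one_mul]
  exact ENNReal.ofReal_le_ofReal <| Real.rpow_le_rpow_of_nonpos hpos
    (one_sub_norm_sq_le_of_mem_ball_peakCenter hm hx hy) (neg_nonpos.2 hα)

theorem exists_ofReal_mul_rpow_le_fracSphMaxSup_chiBall {n m : ℕ} (hn : 1 ≤ n) (hm : 1 ≤ m)
    {α : ℝ} (hα0 : 0 ≤ α) (hα1 : α < 1) :
    ∃ C > (0 : ℝ), ∀ x : EuclideanSpace ℝ (Fin n), 1 ≤ ‖x‖ →
      ENNReal.ofReal (C * ‖x‖ ^ (-((m * n : ℕ) - α : ℝ))) ≤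
        fracSphMaxSup (m := m) α (fun _ ↦ chiBall n) x := by
  have hmn : 0 < m * n := Nat.mul_pos hm hn
  have : Nonempty (Fin m × Fin n) := ⟨(⟨0, hm⟩, ⟨0, hn⟩)⟩
  set K := 2 / (omegaConst (m * n) * betaG ((m * n : ℕ) / 2 : ℝ) (1 - α))
  have hK : 0 < K := div_pos two_pos <|
    mul_pos (omegaConst_pos hmn) (betaG_pos (by positivity) (by linarith))
  set V := volume (Metric.ball (0 : EuclideanSpace ℝ (Fin m × Fin n)) 1)
  have hV0 : 0 < V.toReal :=
    ENNReal.toReal_pos (Metric.measure_ball_pos volume _ one_pos).ne' measure_ball_lt_top.ne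
  set N : ℝ := ((m * n : ℕ) : ℝ) with hN
  refine ⟨K * (2 ^ (-α) * (8 * √m) ^ (-N) * V.toReal), by positivity, fun x hx ↦ ?_⟩
  have hx0 : 0 < ‖x‖ := one_pos.trans_le hx
  have ht : 0 < √(m : ℝ) * ‖x‖ := mul_pos (Real.sqrt_pos.2 (by exact_mod_cast hm)) hx0
  have hvol : volume (Metric.ball (peakCenter m x) (8 * (√m * ‖x‖))⁻¹) =
      ENNReal.ofReal (((8 * (√m * ‖x‖))⁻¹) ^ (m * n)) * V := by
    rw [Measure.addHaar_ball _ _ (by positivity), finrank_euclideanSpace, Fintype.card_prod,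
      Fintype.card_fin, Fintype.card_fin]
  have hconst : K * (2 ^ (-α) * (8 * √m) ^ (-N) * V.toReal) * ‖x‖ ^ (-(N - α)) =
      K * ((2 / ‖x‖) ^ (-α) * (((8 * (√m * ‖x‖))⁻¹) ^ (m * n) * V.toReal)) := by
    have h2 : (2 / ‖x‖) ^ (-α) = 2 ^ (-α) * ‖x‖ ^ α := by
      rw [Real.div_rpow zero_le_two hx0.le, Real.rpow_neg hx0.le, div_inv_eq_mul]
    have h8 : ((8 * (√m * ‖x‖))⁻¹) ^ (m * n) = (8 * √m) ^ (-N) * ‖x‖ ^ (-N) := by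
      rw [Real.rpow_neg (by positivity), Real.rpow_neg hx0.le, hN, Real.rpow_natCast,
        Real.rpow_natCast, ← mul_inv, ← mul_pow, mul_assoc, inv_pow]
    have hxpow : ‖x‖ ^ (-(N - α)) = ‖x‖ ^ α * ‖x‖ ^ (-N) := by
      rw [← Real.rpow_add hx0]
      ring_nf
    rw [h2, h8, hxpow]
    ring
  calc ENNReal.ofReal (K * (2 ^ (-α) * (8 * √m) ^ (-N) * V.toReal) * ‖x‖ ^ (-(N - α)))
      = ENNReal.ofReal K * (ENNReal.ofReal ((2 / ‖x‖) ^ (-α)) *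
          volume (Metric.ball (peakCenter m x) (8 * (√m * ‖x‖))⁻¹)) := by
        rw [hvol, hconst, ENNReal.ofReal_mul hK.le, ENNReal.ofReal_mul (by positivity),
          ENNReal.ofReal_mul (by positivity), ENNReal.ofReal_toReal measure_ball_lt_top.ne]
    _ ≤ ENNReal.ofReal K * ∫⁻ y in Metric.ball (0 : EuclideanSpace ℝ (Fin m × Fin n)) 1,
          (∏ i, (‖chiBall n (x - (√m * ‖x‖) • block y i)‖₊ : ℝ≥0∞)) *
            ENNReal.ofReal ((1 - ‖y‖ ^ 2) ^ (-α)) := by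
        gcongr
        exact ofReal_mul_volume_le_setLIntegral_chiBall hm hα0 hx
    _ ≤ fracSphMaxSup α (fun _ ↦ chiBall n) x := ofReal_mul_setLIntegral_le_fracSphMaxSup _ _ _ ht

/-- Lower bound and sharpness: for `f₁ = ⋯ = f_m = χ_{Bⁿ}` there are `C, R > 0` with
`S^m_α(f₁,...,f_m)(x) ≥ C|x|^{-(mn-α)}` for `|x| ≥ R`; consequently
`S^m_α(χ_{Bⁿ},...,χ_{Bⁿ}) ∉ L^p(ℝⁿ)` whenever `p ≤ n/(mn-α)`. -/
theorem fracSphMax_lower_bound {n m : ℕ} (hn : 2 ≤ n) (hm : 1 ≤ m) (α : ℝ)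
    (hα0 : 0 ≤ α) (hα1 : α < 1) :
    (∃ C > (0 : ℝ), ∃ R > (0 : ℝ), ∀ x : EuclideanSpace ℝ (Fin n), R ≤ ‖x‖ →
        ENNReal.ofReal (C * ‖x‖ ^ (-((m * n : ℕ) - α : ℝ))) ≤
          fracSphMaxSup (m := m) α (fun _ => chiBall n) x) ∧
      ∀ p : ℝ, 0 < p → p ≤ (n : ℝ) / ((m * n : ℕ) - α) →
        ∫⁻ x : EuclideanSpace ℝ (Fin n), fracSphMaxSup (m := m) α (fun _ => chiBall n) x ^ p = ⊤ := by
  obtain ⟨C, hC, hlower⟩ :=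
    exists_ofReal_mul_rpow_le_fracSphMaxSup_chiBall (n := n) (by omega) hm hα0 hα1
  refine ⟨⟨C, hC, 1, one_pos, hlower⟩, fun p hp hpn ↦ ?_⟩
  have : Nonempty (Fin n) := ⟨⟨0, by omega⟩⟩
  have hβ : 0 < ((m * n : ℕ) - α : ℝ) := by
    have : (1 : ℝ) ≤ (m * n : ℕ) := by exact_mod_cast Nat.mul_pos hm (by omega)
    linarith
  refine lintegral_eq_top_of_ofReal_mul_norm_rpow_neg_le volume (C := C ^ p)
    (s := ((m * n : ℕ) - α) * p) (Real.rpow_pos_of_pos hC p) one_pos ?_ fun x hx ↦ ?_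
  · rw [finrank_euclideanSpace_fin]
    linarith [(le_div_iff₀ hβ).1 hpn]
  · have hx0 : 0 < ‖x‖ := one_pos.trans_le hx
    rw [← neg_mul, Real.rpow_mul hx0.le, ← Real.mul_rpow hC.le (by positivity),
      ← ENNReal.ofReal_rpow_of_nonneg (by positivity) hp.le]
    gcongr
    exact hlower x hx
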